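/- arXiv:1208.2133 — 4 statements merged into one kernel-verified Lean document; each statement's English description precedes it below -/
import Mathlib

section
/- For a map f : X → Y between metric spaces with X separable, the set S_f = {x ∈ X : Lip f(x) < ∞} is a countable union of closed sets C_k on each of which f restricted to C_k is Lipschitz. Here Lip f(x) = limsup_{r→0} sup_{y ∈ B(x,r)} d_Y(f(x),f(y))/r. -/
/-!
If `Lip f x < K`, then for some `δ > 0` every `y` with `d(x, y) < δ` satisfies
`d(f x, f y) ≤ K d(x, y)`; conversely such an `x` has `Lip f x ≤ K`. The set `A(K, δ)` of
these points is closed (pass to the limit in the triangle inequality through a nearby point of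
`A(K, δ)`), and `f` is `K`-Lipschitz on every piece of `A(K, δ)` of diameter `< δ`. Taking
`K ∈ ℕ`, `δ = 1/(m+1)` and cutting `A(K, δ)` by closed balls of radius `δ/3` around a dense
sequence gives countably many closed pieces.
-/
open Filter Metric Set Topology TopologicalSpace
open scoped ENNReal NNReal

/-- The upper local Lipschitz constant
`Lip f (x) = limsup_{r→0⁺} sup_{y ∈ B(x,r)} d(f x, f y) / r`, valued in `[0,∞]`. -/
noncomputable def upperLip {X Y : Type*} [MetricSpace X] [MetricSpace Y]
    (f : X → Y) (x : X) : ℝ≥0∞ :=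
  limsup (fun r : ℝ => (⨆ y ∈ ball x r, edist (f x) (f y)) / ENNReal.ofReal r)
    (nhdsWithin 0 (Ioi 0))

section PointwiseLipSet

variable {X Y : Type*}

def pointwiseLipSet [PseudoMetricSpace X] [PseudoMetricSpace Y] (f : X → Y) (K : ℝ≥0)
    (δ : ℝ) : Set X :=
  {x | ∀ y, dist x y < δ → dist (f x) (f y) ≤ K * dist x y}

section Pseudo

variable [PseudoMetricSpace X] [PseudoMetricSpace Y] {f : X → Y} {K : ℝ≥0} {δ : ℝ}

theorem isClosed_pointwiseLipSet (f : X → Y) (K : ℝ≥0) (δ : ℝ) :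
    IsClosed (pointwiseLipSet f K δ) := by
  refine isClosed_of_closure_subset fun x hx y hxy => ?_
  have := mem_closure_iff_nhdsWithin_neBot.mp hx
  have hnear : ∀ᶠ z in 𝓝[pointwiseLipSet f K δ] x,
      z ∈ pointwiseLipSet f K δ ∧ dist z x < δ ∧ dist z y < δ := by
    filter_upwards [self_mem_nhdsWithin,
      nhdsWithin_le_nhds (ball_mem_nhds x (sub_pos.mpr hxy))] with z hz hzx
    rw [mem_ball] at hzx
    exact ⟨hz, by linarith [dist_nonneg (x := x) (y := y)],
      by linarith [dist_triangle z x y]⟩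
  have hbound : Tendsto (fun z => K * dist z x + K * dist z y) (𝓝[pointwiseLipSet f K δ] x)
      (𝓝 (K * dist x y)) := by
    have hcont : Continuous fun z => (K : ℝ) * dist z x + K * dist z y := by fun_prop
    simpa using (hcont.tendsto x).mono_left nhdsWithin_le_nhds
  refine ge_of_tendsto hbound (hnear.mono fun z ⟨hz, hzx, hzy⟩ => ?_)
  calc dist (f x) (f y) ≤ dist (f z) (f x) + dist (f z) (f y) := dist_triangle_left _ _ _
    _ ≤ K * dist z x + K * dist z y := add_le_add (hz x hzx) (hz y hzy)

theorem lipschitzOnWith_of_subset_pointwiseLipSet {s : Set X}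
    (hs : s ⊆ pointwiseLipSet f K δ) (hsδ : ∀ x ∈ s, ∀ y ∈ s, dist x y < δ) :
    LipschitzOnWith K f s :=
  LipschitzOnWith.of_dist_le_mul fun x hx y hy => hs hx y (hsδ x hx y hy)

theorem lipschitzOnWith_pointwiseLipSet_inter_closedBall (hδ : 0 < δ) (c : X) :
    LipschitzOnWith K f (pointwiseLipSet f K δ ∩ closedBall c (δ / 3)) :=
  lipschitzOnWith_of_subset_pointwiseLipSet inter_subset_left fun x hx y hy =>
    (dist_triangle_right x y c).trans_lt
      (by linarith [mem_closedBall.mp hx.2, mem_closedBall.mp hy.2])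

theorem DenseRange.iUnion_inter_closedBall {ι : Type*} {u : ι → X} (hu : DenseRange u)
    {r : ℝ} (hr : 0 < r) (s : Set X) : ⋃ i, s ∩ closedBall (u i) r = s := by
  have hcover : ⋃ i, closedBall (u i) r = univ := eq_univ_of_forall fun x => by
    obtain ⟨i, hi⟩ := hu.exists_dist_lt x hr
    exact mem_iUnion.mpr ⟨i, mem_closedBall.mpr hi.le⟩
  rw [← inter_iUnion, hcover, inter_univ]

end Pseudo

variable [MetricSpace X] [MetricSpace Y] {f : X → Y} {K : ℝ≥0} {δ : ℝ}

theorem upperLip_le_of_mem_pointwiseLipSet {x : X} (hδ : 0 < δ)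
    (hx : x ∈ pointwiseLipSet f K δ) : upperLip f x ≤ K := by
  refine limsup_le_of_le (by isBoundedDefault) ?_
  filter_upwards [Ioo_mem_nhdsGT hδ] with r ⟨hr0, hrδ⟩
  refine ENNReal.div_le_of_le_mul (iSup₂_le fun y hy => ?_)
  rw [mem_ball'] at hy
  rw [← ENNReal.ofReal_coe_nnreal, ← ENNReal.ofReal_mul K.coe_nonneg,
    edist_le_ofReal (by positivity)]
  exact (hx y (hy.trans hrδ)).trans (by gcongr)

theorem exists_mem_pointwiseLipSet_of_upperLip_lt {x : X} (hx : upperLip f x < K) :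
    ∃ δ > 0, x ∈ pointwiseLipSet f K δ := by
  obtain ⟨δ, hδ, hsmall⟩ := mem_nhdsGT_iff_exists_Ioo_subset.mp (eventually_lt_of_limsup_lt hx)
  refine ⟨δ, hδ, fun y hy => ?_⟩
  have hscale : ∀ r ∈ Ioo (dist x y) δ, dist (f x) (f y) ≤ K * r := by
    rintro r ⟨hyr, hrδ⟩
    have hr0 : 0 < r := dist_nonneg.trans_lt hyr
    have hsup : (⨆ z ∈ ball x r, edist (f x) (f z)) ≤ K * ENNReal.ofReal r :=
      (ENNReal.div_le_iff_le_mul (Or.inl (ENNReal.ofReal_pos.mpr hr0).ne')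
        (Or.inl ENNReal.ofReal_ne_top)).mp (hsmall ⟨hr0, hrδ⟩).le
    rw [← edist_le_ofReal (by positivity), ENNReal.ofReal_mul K.coe_nonneg,
      ENNReal.ofReal_coe_nnreal]
    exact (le_iSup₂ (f := fun z (_ : z ∈ ball x r) => edist (f x) (f z)) y
      (mem_ball'.mpr hyr)).trans hsup
  exact ge_of_tendsto ((continuous_const.mul continuous_id).tendsto _ |>.mono_left
    nhdsWithin_le_nhds) (eventually_of_mem (Ioo_mem_nhdsGT hy) hscale)

theorem setOf_upperLip_lt_top_eq_iUnion_pointwiseLipSet :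
    {x | upperLip f x < ⊤} = ⋃ (n : ℕ) (m : ℕ), pointwiseLipSet f n (m + 1 : ℝ)⁻¹ := by
  ext x
  simp only [mem_ofPred_eq, mem_iUnion]
  constructor
  · intro hx
    obtain ⟨n, hn⟩ := ENNReal.exists_nat_gt hx.ne
    obtain ⟨δ, hδ, hxδ⟩ := exists_mem_pointwiseLipSet_of_upperLip_lt (K := n) (by simpa using hn)
    obtain ⟨m, hm⟩ := exists_nat_one_div_lt hδ
    exact ⟨n, m, fun y hy => hxδ y (hy.trans (by simpa using hm))⟩
  · rintro ⟨n, m, hx⟩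
    exact (upperLip_le_of_mem_pointwiseLipSet (by positivity) hx).trans_lt (by simp)

end PointwiseLipSet

/-- For `f : X → Y` with `X` separable, the set `S_f = {x : Lip f x < ∞}` is a countable
union of closed sets on each of which `f` is Lipschitz. -/
theorem stmt_2 {X Y : Type*} [MetricSpace X] [MetricSpace Y]
    [TopologicalSpace.SeparableSpace X] (f : X → Y) :
    ∃ C : ℕ → Set X, (∀ k, IsClosed (C k)) ∧
      (∀ k, ∃ K : ℝ≥0, LipschitzOnWith K f (C k)) ∧
      {x | upperLip f x < ⊤} = ⋃ k, C k := by
  rcases isEmpty_or_nonempty X with hX | hX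
  · exact ⟨fun _ => ∅, fun _ => isClosed_empty, fun _ => ⟨0, lipschitzOnWith_empty _ _⟩,
      Subsingleton.elim _ _⟩
  let D : ℕ × ℕ × ℕ → Set X := fun ⟨n, m, i⟩ =>
    pointwiseLipSet f n (m + 1 : ℝ)⁻¹ ∩ closedBall (denseSeq X i) ((m + 1 : ℝ)⁻¹ / 3)
  have hcover : {x | upperLip f x < ⊤} = ⋃ p, D p := by
    rw [setOf_upperLip_lt_top_eq_iUnion_pointwiseLipSet]
    simp only [iUnion_prod']
    refine iUnion_congr fun n => iUnion_congr fun m => ?_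
    exact ((denseRange_denseSeq X).iUnion_inter_closedBall (by positivity) _).symm
  let e : ℕ ≃ ℕ × ℕ × ℕ := (Denumerable.eqv _).symm
  refine ⟨D ∘ e, fun k => (isClosed_pointwiseLipSet _ _ _).inter isClosed_closedBall,
    fun k => ⟨_, lipschitzOnWith_pointwiseLipSet_inter_closedBall (by positivity) _⟩, ?_⟩
  exact hcover.trans (e.surjective.iUnion_comp D).symm
end

section
/- Let X be a metric measure space, Y a metric space, and f : X → Y continuous. Suppose g : X → [0,∞] satisfies d_Y(f(x),f(y)) ≤ d_X(x,y)(g(x)+g(y)) for all x,y ∈ X. Then 4g is an upper gradient of f: for every rectifiable curve γ : [0,L] → X parameterized by arc length, d_Y(f(γ(0)), f(γ(L))) ≤ 4∫_γ g ds. -/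
/-!
Cut `[0, L]` into `m + 1` pieces of length `c` and pick in each piece a point `t k` at which
`g ∘ γ` is at most its average up to a small error, so that `c * ∑ g (γ (t k))` is at most
`∫ g ∘ γ` plus that error. Consecutive points are at distance at most `2c`, so the hypothesis on
`g` bounds each jump of `f` along the chain by `2c (g (γ (t k)) + g (γ (t (k + 1))))`, and summing
gives the factor `4`. Continuity of `f ∘ γ` controls the two end pieces as `c → 0`.
-/

open Set MeasureTheory
open scoped ENNReal

theorem exists_mul_measure_le_setLIntegral_add {α : Type*} [MeasurableSpace α] {μ : Measure α}
    (h : α → ℝ≥0∞) {s : Set α} (hs : MeasurableSet s) (hμs₀ : μ s ≠ 0) (hμs : μ s ≠ ∞)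
    {ε : ℝ≥0∞} (hε : ε ≠ 0) :
    ∃ x ∈ s, h x * μ s ≤ (∫⁻ x in s, h x ∂μ) + ε := by
  rcases eq_or_ne (∫⁻ x in s, h x ∂μ) ∞ with hint | hint
  · obtain ⟨x, hx⟩ := nonempty_of_measure_ne_zero hμs₀
    exact ⟨x, hx, by simp [hint]⟩
  by_contra! hlt
  have hle : ∀ x ∈ s, ((∫⁻ x in s, h x ∂μ) + ε) / μ s ≤ h x := fun x hx =>
    (ENNReal.div_le_iff hμs₀ hμs).2 (hlt x hx).le
  have hcontra : (∫⁻ x in s, h x ∂μ) + ε ≤ ∫⁻ x in s, h x ∂μ := by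
    calc (∫⁻ x in s, h x ∂μ) + ε = ∫⁻ _ in s, ((∫⁻ x in s, h x ∂μ) + ε) / μ s ∂μ := by
          rw [setLIntegral_const, ENNReal.div_mul_cancel hμs₀ hμs]
      _ ≤ ∫⁻ x in s, h x ∂μ := setLIntegral_mono' hs hle
  exact (ENNReal.lt_add_right hint hε).not_ge hcontra

theorem Monotone.sum_setLIntegral_Ico_succ {α : Type*} [LinearOrder α] [TopologicalSpace α]
    [OrderClosedTopology α] [MeasurableSpace α] [OpensMeasurableSpace α] (μ : Measure α)
    (h : α → ℝ≥0∞) {a : ℕ → α} (ha : Monotone a) (n : ℕ) :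
    ∑ k ∈ Finset.range n, ∫⁻ x in Ico (a k) (a (k + 1)), h x ∂μ =
      ∫⁻ x in Ico (a 0) (a n), h x ∂μ := by
  have hdisj : (Finset.range n : Set ℕ).PairwiseDisjoint fun k => Ico (a k) (a (k + 1)) :=
    fun i _ j _ hij => by
      simpa only [Order.succ_eq_add_one] using ha.pairwise_disjoint_on_Ico_succ hij
  rw [← lintegral_biUnion_finset hdisj (fun _ _ => measurableSet_Ico)]
  congr 2
  exact Subset.antisymm (iUnion₂_subset fun k hk => Ico_subset_Ico (ha k.zero_le)
    (ha (Finset.mem_range.1 hk))) (Ico_subset_biUnion_Ico n a)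

theorem exists_sum_mul_le_setLIntegral_Ico_add (h : ℝ → ℝ≥0∞) {c : ℝ} (hc : 0 < c) (n : ℕ)
    {η : ℝ≥0∞} (hη : η ≠ 0) :
    ∃ t : ℕ → ℝ, (∀ k : ℕ, t k ∈ Ico (k * c) ((k + 1) * c)) ∧
      ∑ k ∈ Finset.range n, ENNReal.ofReal c * h (t k) ≤ (∫⁻ u in Ico 0 (n * c), h u) + η := by
  have hvol (k : ℕ) : volume (Ico (k * c) ((k + 1) * c)) = ENNReal.ofReal c := by
    rw [Real.volume_Ico]; ring_nf
  choose t ht hle using fun k : ℕ => exists_mul_measure_le_setLIntegral_add h measurableSet_Ico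
    (by rw [hvol k]; positivity) (by rw [hvol k]; exact ENNReal.ofReal_ne_top)
    (ENNReal.div_ne_zero.2 ⟨hη, ENNReal.natCast_ne_top n⟩)
  refine ⟨t, ht, ?_⟩
  have hmono : Monotone fun k : ℕ => (k : ℝ) * c := fun i j hij =>
    mul_le_mul_of_nonneg_right (by exact_mod_cast hij) hc.le
  calc ∑ k ∈ Finset.range n, ENNReal.ofReal c * h (t k)
      ≤ ∑ k ∈ Finset.range n, ((∫⁻ u in Ico (k * c) ((k + 1) * c), h u) + η / n) :=
        Finset.sum_le_sum fun k _ => by rw [mul_comm, ← hvol k]; exact hle k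
    _ = (∫⁻ u in Ico 0 (n * c), h u) + n * (η / n) := by
        rw [Finset.sum_add_distrib, Finset.sum_const, Finset.card_range, nsmul_eq_mul]
        congr 1
        simpa using hmono.sum_setLIntegral_Ico_succ volume h n
    _ ≤ (∫⁻ u in Ico 0 (n * c), h u) + η := by gcongr; exact ENNReal.mul_div_le

theorem edist_add_two_mul_le_four_mul_sum {X Y : Type*} [PseudoEMetricSpace X]
    [PseudoEMetricSpace Y] {f : X → Y} {g : X → ℝ≥0∞}
    (hfg : ∀ x y, edist (f x) (f y) ≤ edist x y * (g x + g y)) {x : ℕ → X} {r : ℝ≥0∞} {m : ℕ}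
    (hx : ∀ k < m, edist (x k) (x (k + 1)) ≤ 2 * r) :
    edist (f (x 0)) (f (x m)) + 2 * r * g (x m) ≤
      4 * ∑ k ∈ Finset.range (m + 1), r * g (x k) := by
  -- The extra term `2 * r * g (x m)` pays for the half of the next jump that is charged to `x m`.
  induction m with
  | zero =>
    simp only [edist_self, zero_add, Finset.sum_range_one, ← mul_assoc]
    gcongr
    norm_num
  | succ m ih =>
    calc edist (f (x 0)) (f (x (m + 1))) + 2 * r * g (x (m + 1))
        ≤ edist (f (x 0)) (f (x m)) + edist (f (x m)) (f (x (m + 1))) +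
            2 * r * g (x (m + 1)) := by
          gcongr; exact edist_triangle _ _ _
      _ ≤ edist (f (x 0)) (f (x m)) + 2 * r * (g (x m) + g (x (m + 1))) +
            2 * r * g (x (m + 1)) := by
          gcongr; exact (hfg _ _).trans (by gcongr; exact hx m m.lt_succ_self)
      _ = (edist (f (x 0)) (f (x m)) + 2 * r * g (x m)) + 4 * (r * g (x (m + 1))) := by ring
      _ ≤ 4 * ∑ k ∈ Finset.range (m + 1), r * g (x k) + 4 * (r * g (x (m + 1))) := by
          gcongr; exact ih fun k hk => hx k (by omega)
      _ = 4 * ∑ k ∈ Finset.range (m + 1 + 1), r * g (x k) := by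
          rw [Finset.sum_range_succ _ (m + 1), mul_add]

theorem ContinuousWithinAt.exists_pos_forall_edist_le {α β : Type*} [PseudoMetricSpace α]
    [PseudoEMetricSpace β] {F : α → β} {s : Set α} {a : α} (hF : ContinuousWithinAt F s a)
    {η : ℝ≥0∞} (hη : η ≠ 0) : ∃ δ > 0, ∀ x ∈ s, dist x a < δ → edist (F x) (F a) ≤ η := by
  obtain ⟨δ, hδ, hball⟩ := Metric.mem_nhdsWithin_iff.1 (EMetric.tendsto_nhds.1 hF η hη.bot_lt)
  exact ⟨δ, hδ, fun x hx hxa => (hball ⟨hxa, hx⟩).le⟩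

theorem exists_edist_le_four_mul_setLIntegral_add {X Y : Type*} [PseudoMetricSpace X]
    [PseudoEMetricSpace Y] {f : X → Y} {g : X → ℝ≥0∞}
    (hfg : ∀ x y, edist (f x) (f y) ≤ edist x y * (g x + g y)) {γ : ℝ → X} {L c : ℝ}
    (hc : 0 < c) (m : ℕ) (hmc : (m + 1) * c = L) (hγ : LipschitzOnWith 1 γ (Icc 0 L))
    {η : ℝ≥0∞} (hη : η ≠ 0) :
    ∃ t₀ ∈ Icc 0 L, dist t₀ 0 ≤ c ∧ ∃ t₁ ∈ Icc 0 L, dist t₁ L ≤ c ∧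
      edist (f (γ t₀)) (f (γ t₁)) ≤ 4 * ((∫⁻ u in Icc 0 L, g (γ u)) + η) := by
  obtain ⟨t, ht, hsum⟩ :=
    exists_sum_mul_le_setLIntegral_Ico_add (fun u => g (γ u)) hc (m + 1) hη
  push_cast at hsum
  rw [hmc] at hsum
  have ht_mem (k : ℕ) (hk : k ≤ m) : t k ∈ Icc 0 L := by
    have hk' : (k : ℝ) + 1 ≤ m + 1 := by exact_mod_cast Nat.succ_le_succ hk
    obtain ⟨h₁, h₂⟩ := ht k
    exact ⟨le_trans (by positivity) h₁, hmc ▸ h₂.le.trans (by gcongr)⟩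
  have hstep (k : ℕ) (hk : k < m) :
      edist (γ (t k)) (γ (t (k + 1))) ≤ 2 * ENNReal.ofReal c := by
    have hdist : dist (t k) (t (k + 1)) ≤ 2 * c := by
      obtain ⟨h₁, h₂⟩ := ht k
      obtain ⟨h₃, h₄⟩ := ht (k + 1)
      push_cast at h₃ h₄
      rw [Real.dist_eq, abs_sub_le_iff]
      constructor <;> linarith
    calc edist (γ (t k)) (γ (t (k + 1))) ≤ edist (t k) (t (k + 1)) := by
          simpa using hγ (ht_mem k hk.le) (ht_mem (k + 1) hk)
      _ ≤ ENNReal.ofReal (2 * c) := (edist_le_ofReal (by positivity)).2 hdist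
      _ = 2 * ENNReal.ofReal c := by rw [ENNReal.ofReal_mul zero_le_two, ENNReal.ofReal_ofNat]
  obtain ⟨h₀, h₀'⟩ := ht 0
  obtain ⟨hm, hm'⟩ := ht m
  refine ⟨t 0, ht_mem 0 m.zero_le, ?_, t m, ht_mem m le_rfl, ?_, ?_⟩
  · rw [Real.dist_eq, abs_le]; push_cast at h₀ h₀'; constructor <;> linarith
  · rw [Real.dist_eq, abs_le]; constructor <;> linarith
  calc edist (f (γ (t 0))) (f (γ (t m)))
      ≤ edist (f (γ (t 0))) (f (γ (t m))) + 2 * ENNReal.ofReal c * g (γ (t m)) := le_self_add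
    _ ≤ 4 * ∑ k ∈ Finset.range (m + 1), ENNReal.ofReal c * g (γ (t k)) :=
        edist_add_two_mul_le_four_mul_sum hfg hstep
    _ ≤ 4 * ((∫⁻ u in Icc 0 L, g (γ u)) + η) := by
        gcongr
        exact hsum.trans (by gcongr; exact Ico_subset_Icc_self)

theorem stmt_6_general {X Y : Type*} [MetricSpace X] [MetricSpace Y]
    (f : X → Y) (hf : Continuous f) (g : X → ℝ≥0∞)
    (hfg : ∀ x y : X, edist (f x) (f y) ≤ edist x y * (g x + g y))
    (L : ℝ) (hL : 0 ≤ L) (γ : ℝ → X)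
    (hγ : ∀ s ∈ Icc 0 L, ∀ t ∈ Icc 0 L, dist (γ s) (γ t) ≤ |s - t|) :
    edist (f (γ 0)) (f (γ L)) ≤ 4 * ∫⁻ t in Icc 0 L, g (γ t) := by
  rcases hL.eq_or_lt with rfl | hLpos
  · simp
  have hγL : LipschitzOnWith 1 γ (Icc 0 L) := LipschitzOnWith.mk_one hγ
  have hcont : ContinuousOn (f ∘ γ) (Icc 0 L) := hf.comp_continuousOn hγL.continuousOn
  refine ENNReal.le_of_forall_pos_le_add fun ε hε _ => ?_
  have hη : (ε : ℝ≥0∞) / 6 ≠ 0 := by simpa using hε.ne'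
  obtain ⟨δ₀, hδ₀, hnear₀⟩ := (hcont 0 (left_mem_Icc.2 hL)).exists_pos_forall_edist_le hη
  obtain ⟨δ₁, hδ₁, hnear₁⟩ := (hcont L (right_mem_Icc.2 hL)).exists_pos_forall_edist_le hη
  obtain ⟨m, hm⟩ := exists_nat_one_div_lt (div_pos (lt_min hδ₀ hδ₁) hLpos)
  have hcδ : L / (m + 1) < min δ₀ δ₁ := by rwa [lt_div_iff₀ hLpos, one_div_mul_eq_div] at hm
  obtain ⟨t₀, ht₀, hdist₀, t₁, ht₁, hdist₁, hmid⟩ :=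
    exists_edist_le_four_mul_setLIntegral_add hfg (c := L / (m + 1)) (by positivity) m
      (by field_simp) hγL hη
  calc edist (f (γ 0)) (f (γ L))
      ≤ edist (f (γ t₀)) (f (γ 0)) + edist (f (γ t₀)) (f (γ t₁)) +
          edist (f (γ t₁)) (f (γ L)) := by
        rw [edist_comm (f (γ t₀))]; exact edist_triangle4 _ _ _ _
    _ ≤ ε / 6 + 4 * ((∫⁻ t in Icc 0 L, g (γ t)) + ε / 6) + ε / 6 := by
        gcongr
        · exact hnear₀ t₀ ht₀ (hdist₀.trans_lt (hcδ.trans_le (min_le_left _ _)))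
        · exact hnear₁ t₁ ht₁ (hdist₁.trans_lt (hcδ.trans_le (min_le_right _ _)))
    _ = 4 * (∫⁻ t in Icc 0 L, g (γ t)) + 6 * (ε / 6) := by ring
    _ = 4 * (∫⁻ t in Icc 0 L, g (γ t)) + ε := by
        rw [ENNReal.mul_div_cancel (by norm_num) (by norm_num)]

/-- If `f : X → Y` is continuous and `g : X → [0,∞]` is Borel with
`d(f x, f y) ≤ d(x,y)(g x + g y)` for all `x, y`, then `4g` is an upper gradient of `f`:
for every rectifiable curve `γ` parameterized by arc length on `[0, L]`,
`d(f (γ 0), f (γ L)) ≤ 4 ∫_γ g ds`. -/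
theorem stmt_6 {X Y : Type*} [MetricSpace X] [MetricSpace Y]
    [MeasurableSpace X] [BorelSpace X]
    (f : X → Y) (hf : Continuous f) (g : X → ℝ≥0∞) (hg : Measurable g)
    (hfg : ∀ x y : X, edist (f x) (f y) ≤ edist x y * (g x + g y))
    (L : ℝ) (hL : 0 ≤ L) (γ : ℝ → X)
    (hγ : ∀ s ∈ Icc 0 L, ∀ t ∈ Icc 0 L, dist (γ s) (γ t) ≤ |s - t|) :
    edist (f (γ 0)) (f (γ L)) ≤ 4 * ∫⁻ t in Icc 0 L, g (γ t) :=
  stmt_6_general f hf g hfg L hL γ hγ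
end

section
/- If f : X → Y is locally Lipschitz between metric spaces, then the lower local Lipschitz constant lip f(x) = liminf_{r→0} sup_{y∈B(x,r)} d_Y(f(x),f(y))/r is an upper gradient of f. -/
/-!
Along the curve, `u t = d(f (γ t), f (γ 0))` is Lipschitz on `[0, L]`, because `f` is Lipschitz on
the compact set `γ '' [0, L]`. So `u` is absolutely continuous and `d(f (γ 0), f (γ L)) = |∫ u'|
≤ ∫ |u'|`. At a point `t` where `u` is differentiable, the point `γ (t + θ r)` with `0 < θ < 1` lies
in the open ball `B(γ t, r)` since `γ` is `1`-Lipschitz. Hence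
`θ |u' t| ≤ liminf_{r → 0⁺} sup_{B(γ t, r)} d(f (γ t), f y) / r = lip f (γ t)`, and `θ → 1` gives
`|u' t| ≤ lip f (γ t)`.
-/

open Filter Metric Set MeasureTheory
open scoped ENNReal NNReal

/-- The lower local Lipschitz constant
`lip f (x) = liminf_{r→0⁺} sup_{y ∈ B(x,r)} d(f x, f y) / r`, valued in `[0,∞]`. -/
noncomputable def lowerLip {X Y : Type*} [MetricSpace X] [MetricSpace Y]
    (f : X → Y) (x : X) : ℝ≥0∞ :=
  liminf (fun r : ℝ => (⨆ y ∈ ball x r, edist (f x) (f y)) / ENNReal.ofReal r)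
    (nhdsWithin 0 (Ioi 0))

open scoped Topology

theorem LocallyLipschitz.exists_lipschitzOnWith_comp {Z X Y : Type*} [PseudoMetricSpace Z]
    [PseudoMetricSpace X] [PseudoMetricSpace Y] {f : X → Y} {g : Z → X} {s : Set Z} {K : ℝ≥0}
    (hf : LocallyLipschitz f) (hg : LipschitzOnWith K g s) (hs : IsCompact s) :
    ∃ K', LipschitzOnWith K' (f ∘ g) s :=
  let ⟨K', hK'⟩ := hf.locallyLipschitzOn.exists_lipschitzOnWith_of_compact
    (hs.image_of_continuousOn hg.continuousOn)
  ⟨K' * K, hK'.comp hg (mapsTo_image g s)⟩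

theorem AbsolutelyContinuousOnInterval.enorm_sub_le_lintegral_deriv {f : ℝ → ℝ} {a b : ℝ}
    (hf : AbsolutelyContinuousOnInterval f a b) (hab : a ≤ b) :
    ‖f b - f a‖ₑ ≤ ∫⁻ x in Icc a b, ‖deriv f x‖ₑ := by
  rw [← hf.integral_deriv_eq_sub, intervalIntegral.integral_of_le hab,
    restrict_Ioc_eq_restrict_Icc]
  exact enorm_integral_le_lintegral_enorm _

theorem tendsto_const_mul_nhdsGT_zero {θ : ℝ} (hθ : 0 < θ) :
    Tendsto (θ * ·) (𝓝[>] 0) (𝓝[>] 0) :=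
  tendsto_comap.mono_left (comap_mulLeft_nhdsGT_zero hθ).ge

section lowerLip

variable {X Y : Type*} [MetricSpace X] [MetricSpace Y] {f : X → Y}

theorem le_lowerLip_of_tendsto {x : X} {p : ℝ → X} {a : ℝ → ℝ≥0∞} {ℓ : ℝ≥0∞}
    (ha : Tendsto a (𝓝[>] 0) (𝓝 ℓ))
    (hp : ∀ᶠ r in 𝓝[>] 0, p r ∈ ball x r ∧ a r ≤ edist (f x) (f (p r)) / ENNReal.ofReal r) :
    ℓ ≤ lowerLip f x :=
  ha.liminf_eq ▸ liminf_le_liminf (hp.mono fun r hr =>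
    hr.2.trans (ENNReal.div_le_div_right (le_iSup₂_of_le (p r) hr.1 le_rfl) _))

variable {γ : ℝ → X} {u : ℝ → ℝ} {t c : ℝ}

theorem ofReal_mul_abs_le_lowerLip_of_hasDerivAt {θ : ℝ} (hθ : 0 < θ) (hθ1 : θ < 1)
    (hγ : ∀ᶠ s in 𝓝 t, dist (γ s) (γ t) ≤ |s - t|)
    (hu : ∀ᶠ s in 𝓝 t, |u s - u t| ≤ dist (f (γ s)) (f (γ t))) (hd : HasDerivAt u c t) :
    ENNReal.ofReal (θ * |c|) ≤ lowerLip f (γ t) := by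
  have hslope : Tendsto (fun r => (θ * r)⁻¹ * (u (t + θ * r) - u t)) (𝓝[>] 0) (𝓝 c) :=
    hd.tendsto_slope_zero_right.comp (tendsto_const_mul_nhdsGT_zero hθ)
  have hnear : Tendsto (fun r => t + θ * r) (𝓝[>] 0) (𝓝 t) := by
    simpa using tendsto_const_nhds.add
      ((tendsto_const_mul_nhdsGT_zero hθ).mono_right nhdsWithin_le_nhds)
  refine le_lowerLip_of_tendsto (p := fun r => γ (t + θ * r))
    (ENNReal.tendsto_ofReal (hslope.abs.const_mul θ)) ?_
  filter_upwards [self_mem_nhdsWithin, hnear.eventually hγ, hnear.eventually hu]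
    with r (hr : 0 < r) hγr hur
  have hθr : |t + θ * r - t| = θ * r := by
    rw [add_sub_cancel_left, abs_of_pos (by positivity)]
  refine ⟨?_, ?_⟩
  · rw [mem_ball]
    calc dist (γ (t + θ * r)) (γ t) ≤ θ * r := hγr.trans hθr.le
      _ < r := by nlinarith
  · have hquot : θ * |(θ * r)⁻¹ * (u (t + θ * r) - u t)| = |u (t + θ * r) - u t| / r := by
      rw [abs_mul, abs_inv, abs_of_pos (by positivity : 0 < θ * r)]
      field_simp
    rw [hquot, ENNReal.ofReal_div_of_pos hr, edist_comm, edist_dist]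
    exact ENNReal.div_le_div_right (ENNReal.ofReal_le_ofReal hur) _

theorem ofReal_abs_le_lowerLip_of_hasDerivAt
    (hγ : ∀ᶠ s in 𝓝 t, dist (γ s) (γ t) ≤ |s - t|)
    (hu : ∀ᶠ s in 𝓝 t, |u s - u t| ≤ dist (f (γ s)) (f (γ t))) (hd : HasDerivAt u c t) :
    ENNReal.ofReal |c| ≤ lowerLip f (γ t) := by
  refine ENNReal.le_of_forall_lt_one_mul_le fun a ha => ?_
  obtain rfl | ha0 := eq_zero_or_pos a
  · simp
  have hθ1 : a.toReal < 1 := ENNReal.toReal_lt_of_lt_ofReal (by simpa using ha)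
  rw [← ENNReal.ofReal_toReal ha.ne_top, ← ENNReal.ofReal_mul ENNReal.toReal_nonneg]
  exact ofReal_mul_abs_le_lowerLip_of_hasDerivAt (ENNReal.toReal_pos ha0.ne' ha.ne_top) hθ1
    hγ hu hd

end lowerLip

theorem stmt_8_general {X Y : Type*} [MetricSpace X] [MetricSpace Y]
    (f : X → Y) (hf : LocallyLipschitz f)
    (L : ℝ) (hL : 0 ≤ L) (γ : ℝ → X)
    (hγ : ∀ s ∈ Icc 0 L, ∀ t ∈ Icc 0 L, dist (γ s) (γ t) ≤ |s - t|) :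
    edist (f (γ 0)) (f (γ L)) ≤ ∫⁻ t in Icc 0 L, lowerLip f (γ t) := by
  obtain ⟨K, hK⟩ := hf.exists_lipschitzOnWith_comp
    (LipschitzOnWith.of_dist_le_mul (K := 1) (by simpa [← Real.dist_eq] using hγ)) isCompact_Icc
  set u : ℝ → ℝ := fun t => dist (f (γ t)) (f (γ 0))
  have hu : AbsolutelyContinuousOnInterval u 0 L := by
    refine LipschitzOnWith.absolutelyContinuousOnInterval (K := 1 * K) ?_
    rw [uIcc_of_le hL]
    exact (LipschitzWith.dist_left _).comp_lipschitzOnWith hK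
  have hderiv : ∀ᵐ t ∂volume.restrict (Icc 0 L), ‖deriv u t‖ₑ ≤ lowerLip f (γ t) := by
    rw [← restrict_Ioo_eq_restrict_Icc]
    filter_upwards [ae_restrict_of_ae hu.ae_differentiableAt,
      self_mem_ae_restrict measurableSet_Ioo] with t hdiff ht
    rw [Real.enorm_eq_ofReal_abs]
    refine ofReal_abs_le_lowerLip_of_hasDerivAt ?_ (.of_forall fun s => abs_dist_sub_le _ _ _)
      (hdiff (Icc_subset_uIcc (Ioo_subset_Icc_self ht))).hasDerivAt
    filter_upwards [Icc_mem_nhds ht.1 ht.2] with s hs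
    exact hγ s hs t (Ioo_subset_Icc_self ht)
  calc edist (f (γ 0)) (f (γ L)) = ‖u L - u 0‖ₑ := by
        simp [u, edist_comm, edist_dist, Real.enorm_eq_ofReal_abs]
    _ ≤ ∫⁻ t in Icc 0 L, ‖deriv u t‖ₑ := hu.enorm_sub_le_lintegral_deriv hL
    _ ≤ ∫⁻ t in Icc 0 L, lowerLip f (γ t) := lintegral_mono_ae hderiv

/-- If `f : X → Y` is locally Lipschitz, then `lip f` is an upper gradient of `f`:
for every rectifiable curve `γ` parameterized by arc length on `[0, L]`,
`d(f (γ 0), f (γ L)) ≤ ∫_γ lip f ds`. -/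
theorem stmt_8 {X Y : Type*} [MetricSpace X] [MetricSpace Y]
    [MeasurableSpace X] [BorelSpace X]
    (f : X → Y) (hf : LocallyLipschitz f)
    (L : ℝ) (hL : 0 ≤ L) (γ : ℝ → X)
    (hγ : ∀ s ∈ Icc 0 L, ∀ t ∈ Icc 0 L, dist (γ s) (γ t) ≤ |s - t|) :
    edist (f (γ 0)) (f (γ L)) ≤ ∫⁻ t in Icc 0 L, lowerLip f (γ t) :=
  stmt_8_general f hf L hL γ hγ
end

section
/- Let X be a doubling metric space. Then X is complete if and only if X is proper (closed bounded subsets are compact). -/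
open Metric Set

/-!
Iterating the doubling property, a ball of radius `r` is covered by finitely many balls of
radius `r / 2 ^ k` for every `k`, so balls are totally bounded. In a complete space closed
totally bounded sets are compact, and `closedBall x r ⊆ ball x (r + 1)`.
-/

section HalfRadiusCovers

variable {X : Type*} [PseudoMetricSpace X]

theorem exists_finite_ball_subset_iUnion_ball_div_two_pow
    (hcov : ∀ (x : X) (r : ℝ), 0 < r →
      ∃ s : Set X, s.Finite ∧ ball x r ⊆ ⋃ y ∈ s, ball y (r / 2))
    (x : X) {r : ℝ} (hr : 0 < r) (k : ℕ) :
    ∃ s : Set X, s.Finite ∧ ball x r ⊆ ⋃ y ∈ s, ball y (r / 2 ^ k) := by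
  induction k with
  | zero => exact ⟨{x}, finite_singleton x, by simp⟩
  | succ k ih =>
    obtain ⟨s, hs, hxs⟩ := ih
    choose t ht hyt using fun y : X => hcov y (r / 2 ^ k) (by positivity)
    refine ⟨⋃ y ∈ s, t y, hs.biUnion fun y _ => ht y, hxs.trans ?_⟩
    intro z hz
    obtain ⟨y, hy, hzy⟩ := mem_iUnion₂.1 hz
    obtain ⟨w, hw, hzw⟩ := mem_iUnion₂.1 (hyt y hzy)
    exact mem_iUnion₂.2 ⟨w, mem_iUnion₂.2 ⟨y, hy, hw⟩, by rwa [pow_succ, ← div_div]⟩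

theorem totallyBounded_ball_of_forall_ball_subset_finite_iUnion_ball
    (hcov : ∀ (x : X) (r : ℝ), 0 < r →
      ∃ s : Set X, s.Finite ∧ ball x r ⊆ ⋃ y ∈ s, ball y (r / 2))
    (x : X) (r : ℝ) : TotallyBounded (ball x r) := by
  rcases le_or_gt r 0 with hr | hr
  · simp [ball_eq_empty.2 hr]
  rw [Metric.totallyBounded_iff]
  intro ε hε
  obtain ⟨k, hk⟩ : ∃ k : ℕ, r / ε < 2 ^ k := pow_unbounded_of_one_lt _ one_lt_two
  have hrk : r / 2 ^ k < ε := by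
    rw [div_lt_iff₀ hε] at hk
    rw [div_lt_iff₀ (by positivity)]
    linarith
  obtain ⟨s, hs, hxs⟩ := exists_finite_ball_subset_iUnion_ball_div_two_pow hcov x hr k
  exact ⟨s, hs, hxs.trans (iUnion₂_mono fun y _ => ball_subset_ball hrk.le)⟩

theorem properSpace_of_forall_ball_subset_finite_iUnion_ball [CompleteSpace X]
    (hcov : ∀ (x : X) (r : ℝ), 0 < r →
      ∃ s : Set X, s.Finite ∧ ball x r ⊆ ⋃ y ∈ s, ball y (r / 2)) :
    ProperSpace X :=
  ProperSpace.of_isCompact_closedBall_of_le 0 fun x r _ =>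
    ((totallyBounded_ball_of_forall_ball_subset_finite_iUnion_ball hcov x (r + 1)).subset
      (closedBall_subset_ball (lt_add_one r))).isCompact_of_isClosed isClosed_closedBall

end HalfRadiusCovers

/-- A doubling metric space (every ball of radius `r` is covered by at most `n` balls of
radius `r/2`) is complete if and only if it is proper. -/
theorem stmt_13 {X : Type*} [MetricSpace X]
    (hdbl : ∃ n : ℕ, ∀ (x : X) (r : ℝ), 0 < r →
      ∃ s : Finset X, s.card ≤ n ∧ ball x r ⊆ ⋃ y ∈ s, ball y (r / 2)) :
    CompleteSpace X ↔ ProperSpace X := by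
  obtain ⟨n, hn⟩ := hdbl
  refine ⟨fun _ => properSpace_of_forall_ball_subset_finite_iUnion_ball fun x r hr => ?_,
    fun _ => inferInstance⟩
  obtain ⟨s, -, hs⟩ := hn x r hr
  exact ⟨s, s.finite_toSet, hs⟩
end
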